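/- arXiv:1409.1745 — 3 statements merged into one kernel-verified Lean document; each statement's English description precedes it below -/
import Mathlib

section
/- Fix $i < s$ in $(-1,1)$ and $f_0 \in (i,s)$. Define $V(x) = s - i + \int_x^{f_0} c(i,y,s)[L(y)-L(x)]\,m(dy)$ for $x \in [i, f_0]$. Then $V(f_0) = s-i$, $V'(f_0-) = 0$ (smooth fit), $\mathbb L_X V(x) = c(i,x,s)$ for $x \in (i, f_0)$, and $V(x) \ge s-i$ for all $x \in [i,f_0]$ whenever $c(i,\cdot,s) > 0$. -/
/-!
Writing the integrand as `ρ(y) (L(y) - L(x))` with `ρ = c · m'`, differentiation under the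
integral gives `V' = -L' B` with `B(x) = ∫_x^{f₀} ρ`, which vanishes at `f₀`. Since the scale
density satisfies `L'' = -(2μ/σ²) L'`, the drift terms cancel in `𝕃_X V` and only
`(σ²/2) L' ρ = c` survives. Finally `L` is increasing and `ρ > 0`, so the integral defining
`V - (s - i)` is nonnegative.
-/

open MeasureTheory Set Filter Topology

noncomputable section

/-- `L'` for the scale function `L` normalised by `L(0) = 0`, `L'(0) = 1`. -/
def scaleDensity (μ σ : ℝ → ℝ) (y : ℝ) : ℝ :=
  Real.exp (-∫ z in (0:ℝ)..y, μ z / (σ z ^ 2 / 2))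

/-- The density `m(dy) = 2 dy / (σ(y)² L'(y))` of the speed measure. -/
def speedDensity (μ σ : ℝ → ℝ) (y : ℝ) : ℝ :=
  (scaleDensity μ σ y * (σ y ^ 2 / 2))⁻¹

def greenIntegral (ρ L : ℝ → ℝ) (b x : ℝ) : ℝ :=
  ∫ y in x..b, ρ y * (L y - L x)

theorem scaleDensity_pos (μ σ : ℝ → ℝ) (y : ℝ) : 0 < scaleDensity μ σ y :=
  Real.exp_pos _

theorem speedDensity_nonneg (μ σ : ℝ → ℝ) (y : ℝ) : 0 ≤ speedDensity μ σ y :=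
  inv_nonneg.2 (mul_nonneg (scaleDensity_pos μ σ y).le (by positivity))

@[simp]
theorem greenIntegral_self (ρ L : ℝ → ℝ) (b : ℝ) : greenIntegral ρ L b b = 0 :=
  intervalIntegral.integral_same

end

theorem derivWithin_Iic_of_eqOn_Icc {f g : ℝ → ℝ} {a b g' : ℝ} (hab : a < b)
    (hfg : EqOn f g (Icc a b)) (hg : HasDerivAt g g' b) : derivWithin f (Iic b) b = g' :=
  (hg.hasDerivWithinAt.congr_of_eventuallyEq (eventually_of_mem (Icc_mem_nhdsLE hab) hfg)
    (hfg (right_mem_Icc.2 hab.le))).derivWithin (uniqueDiffWithinAt_Iic b)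

section OpenOrdConnected

variable {U : Set ℝ} [U.OrdConnected] {f L : ℝ → ℝ} {a x : ℝ}

theorem ContinuousOn.hasDerivAt_intervalIntegral_right (hU : IsOpen U) (hf : ContinuousOn f U)
    (ha : a ∈ U) (hx : x ∈ U) : HasDerivAt (fun u => ∫ y in a..u, f y) (f x) x :=
  intervalIntegral.integral_hasDerivAt_right
    ((hf.mono (Set.OrdConnected.uIcc_subset ‹_› ha hx)).intervalIntegrable)
    (hf.stronglyMeasurableAtFilter hU x hx) (hf.continuousAt (hU.mem_nhds hx))

theorem ContinuousOn.hasDerivAt_intervalIntegral_left (hU : IsOpen U) (hf : ContinuousOn f U)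
    (ha : a ∈ U) (hx : x ∈ U) : HasDerivAt (fun u => ∫ y in u..a, f y) (-f x) x :=
  intervalIntegral.integral_hasDerivAt_left
    ((hf.mono (Set.OrdConnected.uIcc_subset ‹_› hx ha)).intervalIntegrable)
    (hf.stronglyMeasurableAtFilter hU x hx) (hf.continuousAt (hU.mem_nhds hx))

theorem hasDerivAt_of_eqOn_intervalIntegral (hU : IsOpen U) (hf : ContinuousOn f U) (ha : a ∈ U)
    (hL : ∀ u ∈ U, L u = ∫ y in a..u, f y) (hx : x ∈ U) : HasDerivAt L (f x) x :=
  (hf.hasDerivAt_intervalIntegral_right hU ha hx).congr_of_eventuallyEq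
    (eventually_of_mem (hU.mem_nhds hx) hL)

theorem hasDerivAt_exp_neg_intervalIntegral (hU : IsOpen U) (hf : ContinuousOn f U)
    (ha : a ∈ U) (hx : x ∈ U) :
    HasDerivAt (fun u => Real.exp (-∫ y in a..u, f y))
      (-f x * Real.exp (-∫ y in a..x, f y)) x := by
  simpa only [Pi.neg_apply, mul_comm] using (hf.hasDerivAt_intervalIntegral_right hU ha hx).neg.exp

end OpenOrdConnected

section GreenIntegral

variable {U : Set ℝ} [U.OrdConnected] {ρ L L' L'' : ℝ → ℝ} {b x : ℝ}

theorem hasDerivAt_greenIntegral (hU : IsOpen U) (hρ : ContinuousOn ρ U)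
    (hL : ∀ y ∈ U, HasDerivAt L (L' y) y) (hb : b ∈ U) (hx : x ∈ U) :
    HasDerivAt (greenIntegral ρ L b) (-(L' x * ∫ y in x..b, ρ y)) x := by
  have hLcont : ContinuousOn L U := fun y hy => (hL y hy).continuousAt.continuousWithinAt
  have hsplit : (fun x => (∫ y in x..b, ρ y * L y) - L x * ∫ y in x..b, ρ y)
      =ᶠ[𝓝 x] greenIntegral ρ L b := by
    filter_upwards [hU.mem_nhds hx] with u hu
    have hsub : uIcc u b ⊆ U := Set.OrdConnected.uIcc_subset ‹_› hu hb
    rw [greenIntegral, ← intervalIntegral.integral_const_mul,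
      ← intervalIntegral.integral_sub (f := fun y => ρ y * L y)
        ((hρ.mul hLcont).mono hsub).intervalIntegrable
        ((hρ.mono hsub).intervalIntegrable.const_mul _)]
    simp only [mul_sub, mul_comm (L u)]
  refine (((hρ.mul hLcont).hasDerivAt_intervalIntegral_left hU hb hx).sub
    ((hL x hx).mul (hρ.hasDerivAt_intervalIntegral_left hU hb hx))).congr_of_eventuallyEq
    hsplit.symm |>.congr_deriv ?_
  simp only [Pi.mul_apply]
  ring

theorem hasDerivAt_greenIntegral_self (hU : IsOpen U) (hρ : ContinuousOn ρ U)
    (hL : ∀ y ∈ U, HasDerivAt L (L' y) y) (hb : b ∈ U) : HasDerivAt (greenIntegral ρ L b) 0 b := by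
  simpa using hasDerivAt_greenIntegral hU hρ hL hb hb

theorem deriv_deriv_greenIntegral (hU : IsOpen U) (hρ : ContinuousOn ρ U)
    (hL : ∀ y ∈ U, HasDerivAt L (L' y) y) (hL' : ∀ y ∈ U, HasDerivAt L' (L'' y) y) (hb : b ∈ U)
    (hx : x ∈ U) :
    deriv (deriv (greenIntegral ρ L b)) x = -(L'' x * ∫ y in x..b, ρ y) + L' x * ρ x := by
  have hderiv : (fun x => -(L' x * ∫ y in x..b, ρ y)) =ᶠ[𝓝 x] deriv (greenIntegral ρ L b) := by
    filter_upwards [hU.mem_nhds hx] with u hu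
    exact (hasDerivAt_greenIntegral hU hρ hL hb hu).deriv.symm
  rw [← hderiv.deriv_eq]
  exact (((hL' x hx).mul (hρ.hasDerivAt_intervalIntegral_left hU hb hx)).neg.congr_deriv
    (by ring)).deriv

theorem greenIntegral_nonneg (hxb : x ≤ b) (hρ : ∀ y ∈ Icc x b, 0 ≤ ρ y)
    (hL : MonotoneOn L (Icc x b)) : 0 ≤ greenIntegral ρ L b x :=
  intervalIntegral.integral_nonneg hxb fun y hy =>
    mul_nonneg (hρ y hy) (sub_nonneg.2 (hL (left_mem_Icc.2 hxb) hy hy.1))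

end GreenIntegral

section Diffusion

variable {U : Set ℝ} [U.OrdConnected] {μ σ c L : ℝ → ℝ} {b x : ℝ}

theorem hasDerivAt_scaleDensity (hU : IsOpen U) (h0 : 0 ∈ U) (hμ : ContinuousOn μ U)
    (hσ : ContinuousOn σ U) (hσpos : ∀ y ∈ U, 0 < σ y) (hx : x ∈ U) :
    HasDerivAt (scaleDensity μ σ) (-(μ x / (σ x ^ 2 / 2)) * scaleDensity μ σ x) x :=
  hasDerivAt_exp_neg_intervalIntegral hU
    (hμ.div ((hσ.pow 2).div_const 2) fun y hy => by have := hσpos y hy; positivity) h0 hx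

theorem continuousOn_scaleDensity (hU : IsOpen U) (h0 : 0 ∈ U) (hμ : ContinuousOn μ U)
    (hσ : ContinuousOn σ U) (hσpos : ∀ y ∈ U, 0 < σ y) : ContinuousOn (scaleDensity μ σ) U :=
  fun _ hy => (hasDerivAt_scaleDensity hU h0 hμ hσ hσpos hy).continuousAt.continuousWithinAt

theorem continuousOn_speedDensity (hU : IsOpen U) (h0 : 0 ∈ U) (hμ : ContinuousOn μ U)
    (hσ : ContinuousOn σ U) (hσpos : ∀ y ∈ U, 0 < σ y) : ContinuousOn (speedDensity μ σ) U :=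
  ((continuousOn_scaleDensity hU h0 hμ hσ hσpos).mul ((hσ.pow 2).div_const 2)).inv₀
    fun y hy => mul_ne_zero (scaleDensity_pos μ σ y).ne'
      (div_pos (pow_pos (hσpos y hy) 2) two_pos).ne'

theorem strictMonoOn_of_hasDerivAt_scaleDensity
    (hL : ∀ y ∈ U, HasDerivAt L (scaleDensity μ σ y) y) : StrictMonoOn L U :=
  strictMonoOn_of_hasDerivWithinAt_pos (Set.OrdConnected.convex ‹_›)
    (fun y hy => (hL y hy).continuousAt.continuousWithinAt)
    (fun y hy => (hL y (interior_subset hy)).hasDerivWithinAt) fun y _ => scaleDensity_pos μ σ y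

theorem generator_greenIntegral (hU : IsOpen U) (h0 : 0 ∈ U) (hμ : ContinuousOn μ U)
    (hσ : ContinuousOn σ U) (hσpos : ∀ y ∈ U, 0 < σ y) (hc : ContinuousOn c U)
    (hL : ∀ y ∈ U, HasDerivAt L (scaleDensity μ σ y) y) (hb : b ∈ U) (hx : x ∈ U) :
    μ x * deriv (greenIntegral (fun y => c y * speedDensity μ σ y) L b) x
      + σ x ^ 2 / 2 * deriv (deriv (greenIntegral (fun y => c y * speedDensity μ σ y) L b)) x
      = c x := by
  have hρ : ContinuousOn (fun y => c y * speedDensity μ σ y) U :=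
    hc.mul (continuousOn_speedDensity hU h0 hμ hσ hσpos)
  rw [(hasDerivAt_greenIntegral hU hρ hL hb hx).deriv, deriv_deriv_greenIntegral hU hρ hL
    (fun y hy => hasDerivAt_scaleDensity hU h0 hμ hσ hσpos hy) hb hx]
  generalize ∫ y in x..b, c y * speedDensity μ σ y = B
  have hS : scaleDensity μ σ x ≠ 0 := (scaleDensity_pos μ σ x).ne'
  have hσx : σ x ≠ 0 := (hσpos x hx).ne'
  simp only [speedDensity]
  field_simp
  ring

end Diffusion

theorem candidate_value_function_lower_piece_general
    (μ σ : ℝ → ℝ) (hμ : ContinuousOn μ (Ioo (-1:ℝ) 1))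
    (hσ : ContinuousOn σ (Ioo (-1:ℝ) 1)) (hσpos : ∀ y ∈ Ioo (-1:ℝ) 1, 0 < σ y)
    (L : ℝ → ℝ)
    (hL : ∀ x ∈ Ioo (-1:ℝ) 1,
      L x = ∫ y in (0:ℝ)..x, Real.exp (-∫ z in (0:ℝ)..y, μ z / (σ z ^ 2 / 2)))
    (i s f₀ : ℝ) (hi : i ∈ Ioo (-1:ℝ) 1) (hs : s ∈ Ioo (-1:ℝ) 1)
    (hf₀ : f₀ ∈ Ioo i s)
    (c : ℝ → ℝ) (hc : ContinuousOn c (Ioo (-1:ℝ) 1))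
    (hcpos : ∀ y ∈ Ioo (-1:ℝ) 1, 0 < c y)
    (V : ℝ → ℝ)
    (hV : ∀ x ∈ Icc i f₀,
      V x = s - i + ∫ y in x..f₀, c y * (L y - L x) / (deriv L y * (σ y ^ 2 / 2))) :
    V f₀ = s - i
    ∧ derivWithin V (Iic f₀) f₀ = 0
    ∧ (∀ x ∈ Ioo i f₀,
        μ x * deriv V x + (σ x ^ 2 / 2) * deriv (deriv V) x = c x)
    ∧ ∀ x ∈ Icc i f₀, s - i ≤ V x := by
  set U := Ioo (-1:ℝ) 1
  have h0 : (0:ℝ) ∈ U := ⟨by norm_num, by norm_num⟩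
  have hf₀U : f₀ ∈ U := ⟨hi.1.trans hf₀.1, hf₀.2.trans hs.2⟩
  have hIccU : Icc i f₀ ⊆ U := ordConnected_Ioo.out hi hf₀U
  have hLS : ∀ y ∈ U, HasDerivAt L (scaleDensity μ σ y) y := fun y hy =>
    hasDerivAt_of_eqOn_intervalIntegral isOpen_Ioo
      (continuousOn_scaleDensity isOpen_Ioo h0 hμ hσ hσpos) h0 hL hy
  set ρ := fun y => c y * speedDensity μ σ y
  have hVG : EqOn V (fun x => s - i + greenIntegral ρ L f₀ x) (Icc i f₀) := fun x hx => by
    rw [hV x hx]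
    dsimp only [greenIntegral]
    refine congrArg _ (intervalIntegral.integral_congr fun y hy => ?_)
    rw [(hLS y (hIccU (uIcc_subset_Icc hx (right_mem_Icc.2 hf₀.1.le) hy))).deriv]
    simp only [ρ, speedDensity]
    ring
  refine ⟨by simp [hVG (right_mem_Icc.2 hf₀.1.le)], ?_, fun x hx => ?_, fun x hx => ?_⟩
  · exact derivWithin_Iic_of_eqOn_Icc hf₀.1 hVG ((hasDerivAt_greenIntegral_self isOpen_Ioo
      (hc.mul (continuousOn_speedDensity isOpen_Ioo h0 hμ hσ hσpos)) hLS hf₀U).const_add (s - i))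
  · have hdV : (Ioo i f₀).EqOn (deriv V) (deriv (greenIntegral ρ L f₀)) := by
      simpa using (hVG.mono Ioo_subset_Icc_self).deriv isOpen_Ioo
    rw [hdV hx, hdV.deriv isOpen_Ioo hx]
    exact generator_greenIntegral isOpen_Ioo h0 hμ hσ hσpos hc hLS hf₀U
      (hIccU (Ioo_subset_Icc_self hx))
  · have hxf₀ : Icc x f₀ ⊆ U := (Icc_subset_Icc_left hx.1).trans hIccU
    rw [hVG hx]
    exact le_add_of_nonneg_right (greenIntegral_nonneg hx.2
      (fun y hy => mul_nonneg (hcpos y (hxf₀ hy)).le (speedDensity_nonneg μ σ y))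
      ((strictMonoOn_of_hasDerivAt_scaleDensity hLS).monotoneOn.mono hxf₀))

/-- The candidate value function
`V(x) = s - i + ∫_x^{f₀} c(y)[L(y)-L(x)] m(dy)` on `[i,f₀]` satisfies `V(f₀) = s-i`,
the smooth-fit condition `V'(f₀-) = 0`, `𝕃_X V = c` on `(i,f₀)`, and `V ≥ s-i`
whenever `c > 0`. -/
theorem candidate_value_function_lower_piece
    (μ σ : ℝ → ℝ) (hμ : ContinuousOn μ (Ioo (-1:ℝ) 1))
    (hσ : ContinuousOn σ (Ioo (-1:ℝ) 1)) (hσpos : ∀ y ∈ Ioo (-1:ℝ) 1, 0 < σ y)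
    (L : ℝ → ℝ)
    (hL : ∀ x ∈ Ioo (-1:ℝ) 1,
      L x = ∫ y in (0:ℝ)..x, Real.exp (-∫ z in (0:ℝ)..y, μ z / (σ z ^ 2 / 2)))
    (i s f₀ : ℝ) (hi : i ∈ Ioo (-1:ℝ) 1) (hs : s ∈ Ioo (-1:ℝ) 1)
    (his : i < s) (hf₀ : f₀ ∈ Ioo i s)
    (c : ℝ → ℝ) (hc : ContinuousOn c (Ioo (-1:ℝ) 1))
    (hcpos : ∀ y ∈ Ioo (-1:ℝ) 1, 0 < c y)
    (V : ℝ → ℝ)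
    (hV : ∀ x ∈ Icc i f₀,
      V x = s - i + ∫ y in x..f₀, c y * (L y - L x) / (deriv L y * (σ y ^ 2 / 2))) :
    V f₀ = s - i
    ∧ derivWithin V (Iic f₀) f₀ = 0
    ∧ (∀ x ∈ Ioo i f₀,
        μ x * deriv V x + (σ x ^ 2 / 2) * deriv (deriv V) x = c x)
    ∧ ∀ x ∈ Icc i f₀, s - i ≤ V x :=
  candidate_value_function_lower_piece_general μ σ hμ hσ hσpos L hL i s f₀ hi hs hf₀ c hc hcpos V hV
end

section
/- Let $c_1, c_2: (-1,1) \to \mathbb R$ be continuously differentiable, $L$ the scale function and $H$ a particular solution of $\mathbb L_X H = 1$ for a diffusion $X$ with generator $\mathbb L_X$ on $(-1,1)$. Suppose $V(i,x,s) = A(i,s)L(x) + B(i,s) + (c_2(s)-c_1(i))H(x)$ with $A, B$ twice continuously differentiable, and that $V$ satisfies the normal reflection conditions $\partial_i V(i,x,s)|_{x=i+} = 0$ and $\partial_s V(i,x,s)|_{x=s-} = 0$ for all $i < s$ in some open region. Then $\partial^2 A/\partial i\,\partial s = 0$ and $\partial^2 B/\partial i\,\partial s = 0$ on that region, so $A(i,s)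 = a_1(i) + a_2(s)$ and $B(i,s) = b_1(i) + b_2(s)$ for some functions $a_1, a_2, b_1, b_2$. -/
open Set Filter Function Topology

/-!
Write `∂ᵢ`, `∂ₛ` for the partial derivatives. Normal reflection at `x = i` says
`∂ᵢA(i,s) L(i) + ∂ᵢB(i,s) = c₁'(i) H(i)`, whose right side does not depend on `s`; normal
reflection at `x = s` says `∂ₛA(i,s) L(s) + ∂ₛB(i,s) = -c₂'(s) H(s)`, whose right side does not
depend on `i`. Differentiating the first in `s`, the second in `i`, and using the symmetry of
second derivatives gives `∂ᵢ∂ₛA · L(i) + ∂ᵢ∂ₛB = 0 = ∂ᵢ∂ₛA · L(s) + ∂ᵢ∂ₛB`. Since `i < s` and `L`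
is strictly increasing, both mixed partials vanish, and on a product of intervals a function
with vanishing mixed partial is a sum of a function of `i` and a function of `s`.
-/

theorem HasFDerivAt.hasDerivAt_comp_prodMk_left {E : Type*} [NormedAddCommGroup E]
    [NormedSpace ℝ E] {G : ℝ × ℝ → E} {G' : ℝ × ℝ →L[ℝ] E} {i s : ℝ}
    (hG : HasFDerivAt G G' (i, s)) : HasDerivAt (fun i' => G (i', s)) (G' (1, 0)) i :=
  hG.comp_hasDerivAt i ((hasDerivAt_id i).prodMk (hasDerivAt_const i s))

theorem HasFDerivAt.hasDerivAt_comp_prodMk_right {E : Type*} [NormedAddCommGroup E]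
    [NormedSpace ℝ E] {G : ℝ × ℝ → E} {G' : ℝ × ℝ →L[ℝ] E} {i s : ℝ}
    (hG : HasFDerivAt G G' (i, s)) : HasDerivAt (fun s' => G (i, s')) (G' (0, 1)) s :=
  hG.comp_hasDerivAt s ((hasDerivAt_const s i).prodMk (hasDerivAt_id s))

theorem deriv_mul_const_add_eq_zero_of_eventually_eq {f g : ℝ → ℝ} {x l c : ℝ}
    (hf : DifferentiableAt ℝ f x) (hg : DifferentiableAt ℝ g x)
    (h : (fun y => f y * l + g y) =ᶠ[𝓝 x] fun _ => c) : deriv f x * l + deriv g x = 0 := by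
  rw [← ((hf.hasDerivAt.mul_const l).add hg.hasDerivAt).deriv]
  exact h.deriv_eq.trans (deriv_const x c)

section PartialDerivatives

variable {F : ℝ → ℝ → ℝ}

theorem deriv_uncurry_left (hF : Differentiable ℝ (uncurry F)) (i s : ℝ) :
    deriv (fun i' => F i' s) i = fderiv ℝ (uncurry F) (i, s) (1, 0) :=
  (hF (i, s)).hasFDerivAt.hasDerivAt_comp_prodMk_left.deriv

theorem deriv_uncurry_right (hF : Differentiable ℝ (uncurry F)) (i s : ℝ) :
    deriv (fun s' => F i s') s = fderiv ℝ (uncurry F) (i, s) (0, 1) :=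
  (hF (i, s)).hasFDerivAt.hasDerivAt_comp_prodMk_right.deriv

theorem differentiableAt_uncurry_left (hF : Differentiable ℝ (uncurry F)) (i s : ℝ) :
    DifferentiableAt ℝ (fun i' => F i' s) i :=
  (hF (i, s)).hasFDerivAt.hasDerivAt_comp_prodMk_left.differentiableAt

theorem differentiableAt_uncurry_right (hF : Differentiable ℝ (uncurry F)) (i s : ℝ) :
    DifferentiableAt ℝ (fun s' => F i s') s :=
  (hF (i, s)).hasFDerivAt.hasDerivAt_comp_prodMk_right.differentiableAt

theorem hasDerivAt_deriv_uncurry_left (hF : ContDiff ℝ 2 (uncurry F)) (i s : ℝ) :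
    HasDerivAt (fun s' => deriv (fun i' => F i' s') i)
      (fderiv ℝ (fderiv ℝ (uncurry F)) (i, s) (0, 1) (1, 0)) s := by
  have hF' : Differentiable ℝ (fderiv ℝ (uncurry F)) :=
    (hF.fderiv_right one_add_one_eq_two.le).differentiable one_ne_zero
  simp_rw [deriv_uncurry_left (hF.differentiable two_ne_zero)]
  simpa using (hF' (i, s)).hasFDerivAt.hasDerivAt_comp_prodMk_right.clm_apply
    (hasDerivAt_const s ((1, 0) : ℝ × ℝ))

theorem hasDerivAt_deriv_uncurry_right (hF : ContDiff ℝ 2 (uncurry F)) (i s : ℝ) :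
    HasDerivAt (fun i' => deriv (fun s' => F i' s') s)
      (fderiv ℝ (fderiv ℝ (uncurry F)) (i, s) (1, 0) (0, 1)) i := by
  have hF' : Differentiable ℝ (fderiv ℝ (uncurry F)) :=
    (hF.fderiv_right one_add_one_eq_two.le).differentiable one_ne_zero
  simp_rw [deriv_uncurry_right (hF.differentiable two_ne_zero)]
  simpa using (hF' (i, s)).hasFDerivAt.hasDerivAt_comp_prodMk_left.clm_apply
    (hasDerivAt_const i ((0, 1) : ℝ × ℝ))

theorem deriv_deriv_uncurry_comm (hF : ContDiff ℝ 2 (uncurry F)) (i s : ℝ) :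
    deriv (fun s' => deriv (fun i' => F i' s') i) s
      = deriv (fun i' => deriv (fun s' => F i' s') s) i := by
  rw [(hasDerivAt_deriv_uncurry_left hF i s).deriv,
    (hasDerivAt_deriv_uncurry_right hF i s).deriv]
  exact (hF.contDiffAt.isSymmSndFDerivAt (by simp)).eq _ _

theorem exists_eq_add_of_deriv_deriv_uncurry_eq_zero (hF : ContDiff ℝ 2 (uncurry F))
    {I J : Set ℝ} (hI : IsOpen I) (hI' : IsPreconnected I) (hJ : IsOpen J)
    (hJ' : IsPreconnected J)
    (hmix : ∀ i ∈ I, ∀ s ∈ J, deriv (fun s' => deriv (fun i' => F i' s') i) s = 0) :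
    ∃ a b : ℝ → ℝ, ∀ i ∈ I, ∀ s ∈ J, F i s = a i + b s := by
  rcases J.eq_empty_or_nonempty with rfl | ⟨s₀, hs₀⟩
  · exact ⟨0, 0, by simp⟩
  have hF₁ : Differentiable ℝ (uncurry F) := hF.differentiable two_ne_zero
  have hdiff : ∀ s, DifferentiableOn ℝ (fun i' => F i' s) I := fun s i _ =>
    (differentiableAt_uncurry_left hF₁ i s).differentiableWithinAt
  have hpartial : ∀ s ∈ J, I.EqOn (deriv (fun i' => F i' s)) (deriv (fun i' => F i' s₀)) :=
    fun s hs i hi => hJ.is_const_of_deriv_eq_zero hJ'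
      (fun s' _ =>
        (hasDerivAt_deriv_uncurry_left hF i s').differentiableAt.differentiableWithinAt)
      (fun s' hs' => hmix i hi s' hs') hs hs₀
  choose! b hb using fun s hs =>
    hI.exists_eq_add_of_deriv_eq hI' (hdiff s) (hdiff s₀) (hpartial s hs)
  exact ⟨fun i => F i s₀, b, fun i hi s hs => hb s hs hi⟩

theorem deriv_deriv_uncurry_eq_zero_of_reflection {A B : ℝ → ℝ → ℝ} {L φ ψ : ℝ → ℝ}
    {I J : Set ℝ} (hA : ContDiff ℝ 2 (uncurry A)) (hB : ContDiff ℝ 2 (uncurry B))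
    (hI : IsOpen I) (hJ : IsOpen J)
    (hφ : ∀ i ∈ I, ∀ s ∈ J,
      deriv (fun i' => A i' s) i * L i + deriv (fun i' => B i' s) i = φ i)
    (hψ : ∀ i ∈ I, ∀ s ∈ J,
      deriv (fun s' => A i s') s * L s + deriv (fun s' => B i s') s = ψ s)
    {i s : ℝ} (hi : i ∈ I) (hs : s ∈ J) (hL : L i ≠ L s) :
    deriv (fun s' => deriv (fun i' => A i' s') i) s = 0
      ∧ deriv (fun s' => deriv (fun i' => B i' s') i) s = 0 := by
  have h_i := deriv_mul_const_add_eq_zero_of_eventually_eq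
    (hasDerivAt_deriv_uncurry_left hA i s).differentiableAt
    (hasDerivAt_deriv_uncurry_left hB i s).differentiableAt
    (eventually_of_mem (hJ.mem_nhds hs) fun s' hs' => hφ i hi s' hs')
  have h_s := deriv_mul_const_add_eq_zero_of_eventually_eq
    (hasDerivAt_deriv_uncurry_right hA i s).differentiableAt
    (hasDerivAt_deriv_uncurry_right hB i s).differentiableAt
    (eventually_of_mem (hI.mem_nhds hi) fun i' hi' => hψ i' hi' s hs)
  rw [← deriv_deriv_uncurry_comm hA, ← deriv_deriv_uncurry_comm hB] at h_s
  have hA₀ : deriv (fun s' => deriv (fun i' => A i' s') i) s = 0 := by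
    have h : (L i - L s) * deriv (fun s' => deriv (fun i' => A i' s') i) s = 0 := by
      linear_combination h_i - h_s
    exact (mul_eq_zero.1 h).resolve_left (sub_ne_zero.2 hL)
  exact ⟨hA₀, by linear_combination h_i - L i * hA₀⟩

end PartialDerivatives

section ValueFunction

variable {L H c₁ c₂ : ℝ → ℝ} {A B : ℝ → ℝ → ℝ}

theorem hasDerivAt_value_left (hA : Differentiable ℝ (uncurry A))
    (hB : Differentiable ℝ (uncurry B)) {i : ℝ} (hc₁ : DifferentiableAt ℝ c₁ i) (x s : ℝ) :
    HasDerivAt (fun i' => A i' s * L x + B i' s + (c₂ s - c₁ i') * H x)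
      (deriv (fun i' => A i' s) i * L x + deriv (fun i' => B i' s) i - deriv c₁ i * H x) i := by
  have hV := (((differentiableAt_uncurry_left hA i s).hasDerivAt.mul_const (L x)).add
    (differentiableAt_uncurry_left hB i s).hasDerivAt).add
    (((hasDerivAt_const i (c₂ s)).sub hc₁.hasDerivAt).mul_const (H x))
  exact hV.congr_deriv (by ring)

theorem hasDerivAt_value_right (hA : Differentiable ℝ (uncurry A))
    (hB : Differentiable ℝ (uncurry B)) {s : ℝ} (hc₂ : DifferentiableAt ℝ c₂ s) (i x : ℝ) :
    HasDerivAt (fun s' => A i s' * L x + B i s' + (c₂ s' - c₁ i) * H x)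
      (deriv (fun s' => A i s') s * L x + deriv (fun s' => B i s') s + deriv c₂ s * H x) s := by
  have hV := (((differentiableAt_uncurry_right hA i s).hasDerivAt.mul_const (L x)).add
    (differentiableAt_uncurry_right hB i s).hasDerivAt).add
    ((hc₂.hasDerivAt.sub (hasDerivAt_const s (c₁ i))).mul_const (H x))
  exact hV.congr_deriv (by ring)

end ValueFunction

theorem normal_reflection_implies_additive_separation_general
    (L H c₁ c₂ : ℝ → ℝ)
    (hL : StrictMono L)
    (hc₁ : ContDiff ℝ 1 c₁) (hc₂ : ContDiff ℝ 1 c₂)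
    (A B : ℝ → ℝ → ℝ)
    (hA : ContDiff ℝ 2 fun p : ℝ × ℝ => A p.1 p.2)
    (hB : ContDiff ℝ 2 fun p : ℝ × ℝ => B p.1 p.2)
    (V : ℝ → ℝ → ℝ → ℝ)
    (hV : ∀ i x s, V i x s = A i s * L x + B i s + (c₂ s - c₁ i) * H x)
    (p q u v : ℝ) (hqu : q ≤ u)
    (hrefl_i : ∀ i ∈ Ioo p q, ∀ s ∈ Ioo u v, deriv (fun i' => V i' i s) i = 0)
    (hrefl_s : ∀ i ∈ Ioo p q, ∀ s ∈ Ioo u v, deriv (fun s' => V i s s') s = 0) :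
    (∀ i ∈ Ioo p q, ∀ s ∈ Ioo u v,
        deriv (fun s' => deriv (fun i' => A i' s') i) s = 0
        ∧ deriv (fun s' => deriv (fun i' => B i' s') i) s = 0)
    ∧ ∃ a₁ a₂ b₁ b₂ : ℝ → ℝ, ∀ i ∈ Ioo p q, ∀ s ∈ Ioo u v,
        A i s = a₁ i + a₂ s ∧ B i s = b₁ i + b₂ s := by
  have hA₁ : Differentiable ℝ (uncurry A) := hA.differentiable two_ne_zero
  have hB₁ : Differentiable ℝ (uncurry B) := hB.differentiable two_ne_zero
  have reflect_i : ∀ i ∈ Ioo p q, ∀ s ∈ Ioo u v,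
      deriv (fun i' => A i' s) i * L i + deriv (fun i' => B i' s) i = deriv c₁ i * H i := by
    intro i hi s hs
    have h := hrefl_i i hi s hs
    rw [funext fun i' => hV i' i s,
      (hasDerivAt_value_left hA₁ hB₁ (hc₁.differentiable one_ne_zero i) i s).deriv] at h
    linarith
  have reflect_s : ∀ i ∈ Ioo p q, ∀ s ∈ Ioo u v,
      deriv (fun s' => A i s') s * L s + deriv (fun s' => B i s') s = -(deriv c₂ s * H s) := by
    intro i hi s hs
    have h := hrefl_s i hi s hs
    rw [funext fun s' => hV i s s',
      (hasDerivAt_value_right hA₁ hB₁ (hc₂.differentiable one_ne_zero s) i s).deriv] at h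
    linarith
  have mixed : ∀ i ∈ Ioo p q, ∀ s ∈ Ioo u v,
      deriv (fun s' => deriv (fun i' => A i' s') i) s = 0
        ∧ deriv (fun s' => deriv (fun i' => B i' s') i) s = 0 := fun i hi s hs =>
    deriv_deriv_uncurry_eq_zero_of_reflection hA hB isOpen_Ioo isOpen_Ioo reflect_i reflect_s
      hi hs (hL (hi.2.trans_le (hqu.trans hs.1.le))).ne
  obtain ⟨a₁, a₂, hA_sep⟩ := exists_eq_add_of_deriv_deriv_uncurry_eq_zero hA isOpen_Ioo
    isPreconnected_Ioo isOpen_Ioo isPreconnected_Ioo fun i hi s hs => (mixed i hi s hs).1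
  obtain ⟨b₁, b₂, hB_sep⟩ := exists_eq_add_of_deriv_deriv_uncurry_eq_zero hB isOpen_Ioo
    isPreconnected_Ioo isOpen_Ioo isPreconnected_Ioo fun i hi s hs => (mixed i hi s hs).2
  exact ⟨mixed, a₁, a₂, b₁, b₂, fun i hi s hs => ⟨hA_sep i hi s hs, hB_sep i hi s hs⟩⟩

/-- If `V(i,x,s) = A(i,s)L(x) + B(i,s) + (c₂(s)-c₁(i))H(x)` satisfies the normal
reflection conditions `∂ᵢV(i,x,s)|_{x=i} = 0` and `∂ₛV(i,x,s)|_{x=s} = 0` on an open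
rectangle `R = (p,q) × (u,v)` with `q ≤ u` (so `i < s` on `R`), then the mixed partials
of `A` and `B` vanish on `R` and consequently `A(i,s) = a₁(i) + a₂(s)` and
`B(i,s) = b₁(i) + b₂(s)` on `R`. -/
theorem normal_reflection_implies_additive_separation
    (L H c₁ c₂ : ℝ → ℝ)
    (hL : StrictMono L)
    (hc₁ : ContDiff ℝ 1 c₁) (hc₂ : ContDiff ℝ 1 c₂)
    (A B : ℝ → ℝ → ℝ)
    (hA : ContDiff ℝ 2 fun p : ℝ × ℝ => A p.1 p.2)
    (hB : ContDiff ℝ 2 fun p : ℝ × ℝ => B p.1 p.2)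
    (V : ℝ → ℝ → ℝ → ℝ)
    (hV : ∀ i x s, V i x s = A i s * L x + B i s + (c₂ s - c₁ i) * H x)
    (p q u v : ℝ) (hpq : p < q) (huv : u < v) (hqu : q ≤ u)
    (hrefl_i : ∀ i ∈ Ioo p q, ∀ s ∈ Ioo u v, deriv (fun i' => V i' i s) i = 0)
    (hrefl_s : ∀ i ∈ Ioo p q, ∀ s ∈ Ioo u v, deriv (fun s' => V i s s') s = 0) :
    (∀ i ∈ Ioo p q, ∀ s ∈ Ioo u v,
        deriv (fun s' => deriv (fun i' => A i' s') i) s = 0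
        ∧ deriv (fun s' => deriv (fun i' => B i' s') i) s = 0)
    ∧ ∃ a₁ a₂ b₁ b₂ : ℝ → ℝ, ∀ i ∈ Ioo p q, ∀ s ∈ Ioo u v,
        A i s = a₁ i + a₂ s ∧ B i s = b₁ i + b₂ s :=
  normal_reflection_implies_additive_separation_general L H c₁ c₂ hL hc₁ hc₂ A B hA hB V hV p q u v
    hqu hrefl_i hrefl_s
end

section
/- Let $X$ be a continuous semimartingale, $I_t = i \wedge \inf_{u\le t} X_u$ and $S_t = s \vee \sup_{u \le t} X_u$ for $i \le X_0 \le s$. If $V$ is a $C^{1,2,1}$ function of $(i,x,s)$ on $\{i \le x \le s\}$ satisfying $\partial_i V(i,x,s)|_{x=i} = 0$ and $\partial_s V(i,x,s)|_{x=s} = 0$, then in the Itô expansion of $V(I_t, X_t, S_t)$ the integrals $\int_0^t \partial_i V(I_u,X_u,S_u)\,dI_u$ and $\int_0^t \partial_s V(I_u,X_u,S_u)\,dS_u$ vanish almost surely. -/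
/-!
Both `S` and `-I` are running maxima `u ↦ max c (sup_{[0,u]} f)` of a continuous path (`f = X`
resp. `f = -X`). Off the contact set `{f = running max}` the running maximum is locally
constant, by continuity of `f` and of the running maximum, so its Lebesgue–Stieltjes measure
does not charge that open set. The normal reflection conditions say that the integrands vanish
on the contact set.
-/

open MeasureTheory Set Filter Topology

theorem StieltjesFunction.measure_eq_zero_of_eventuallyEq (F : StieltjesFunction ℝ) {U : Set ℝ}
    (hU : ∀ u ∈ U, F =ᶠ[𝓝 u] fun _ => F u) : F.measure U = 0 := by
  refine measure_null_of_locally_null U fun u hu => ?_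
  obtain ⟨ε, hε, hconst⟩ := Metric.eventually_nhds_iff.mp (hU u hu)
  have hmem : ∀ v, |v - u| ≤ ε / 2 → F v = F u := fun v hv =>
    hconst (by rw [Real.dist_eq]; linarith)
  refine ⟨Ioc (u - ε / 2) (u + ε / 2),
    mem_nhdsWithin_of_mem_nhds (Ioc_mem_nhds (by linarith) (by linarith)), ?_⟩
  rw [F.measure_Ioc, hmem (u + ε / 2) (by rw [add_sub_cancel_left, abs_of_pos]; positivity),
    hmem (u - ε / 2) (by rw [sub_sub_cancel_left, abs_neg, abs_of_pos]; positivity), sub_self,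
    ENNReal.ofReal_zero]

noncomputable def runningMax (c : ℝ) (f : ℝ → ℝ) (u : ℝ) : ℝ :=
  max c (sSup (f '' Icc 0 u))

section runningMax

variable {c : ℝ} {f : ℝ → ℝ}

theorem le_runningMax_of_mem (hf : Continuous f) {u w : ℝ} (hw : w ∈ Icc 0 u) :
    f w ≤ runningMax c f u :=
  le_max_of_le_right <| le_csSup (isCompact_Icc.image hf).bddAbove (mem_image_of_mem f hw)

theorem runningMax_mono (hf : Continuous f) {a b : ℝ} (ha : 0 ≤ a) (hab : a ≤ b) :
    runningMax c f a ≤ runningMax c f b :=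
  max_le_max le_rfl <| csSup_le_csSup (isCompact_Icc.image hf).bddAbove
    ((nonempty_Icc.2 ha).image f) (image_mono (Icc_subset_Icc_right hab))

theorem exists_runningMax_eq (hf : Continuous f) {u : ℝ} (hu : 0 ≤ u) :
    ∃ w ∈ Icc 0 u, runningMax c f u = max c (f w) := by
  obtain ⟨w, hw, hsup, -⟩ :=
    isCompact_Icc.exists_sSup_image_eq_and_ge (nonempty_Icc.2 hu) hf.continuousOn
  exact ⟨w, hw, by rw [runningMax, hsup]⟩

theorem runningMax_le_of_forall_lt (hf : Continuous f) {a b : ℝ} (ha : 0 ≤ a) (hab : a ≤ b)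
    (hlt : ∀ w ∈ Ioc a b, f w < runningMax c f w) : runningMax c f b ≤ runningMax c f a := by
  -- If the max on `[0, b]` is attained at `w > a`, then `f w < max c (f w)` forces it to be `c`.
  obtain ⟨w, hw, hb⟩ := exists_runningMax_eq (c := c) hf (ha.trans hab)
  rcases le_or_gt w a with hwa | haw
  · exact hb ▸ max_le (le_max_left _ _) (le_runningMax_of_mem hf ⟨hw.1, hwa⟩)
  · have hfw : f w < max c (f w) :=
      hb ▸ (hlt w ⟨haw, hw.2⟩).trans_le (runningMax_mono hf (ha.trans haw.le) hw.2)
    have hwc : f w < c := (lt_max_iff.mp hfw).resolve_right (lt_irrefl _)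
    rw [hb, max_eq_left hwc.le]
    exact le_max_left _ _

theorem continuousOn_runningMax (hf : Continuous f) : ContinuousOn (runningMax c f) (Ici 0) := by
  -- Rescale `[0, u]` to the fixed compact `[0, 1]`.
  have hscaled : Continuous fun u => max c (sSup ((fun r => f (r * u)) '' Icc 0 1)) :=
    continuous_const.max <| isCompact_Icc.continuous_sSup (by fun_prop)
  refine hscaled.continuousOn.congr fun u (hu : 0 ≤ u) => ?_
  have hIcc : Icc 0 u = (· * u) '' Icc 0 1 := by
    rw [image_mul_right_Icc zero_le_one hu, zero_mul, one_mul]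
  rw [runningMax, hIcc, image_image]

theorem runningMax_eventuallyEq_of_lt (hf : Continuous f) {u : ℝ} (hu : 0 < u)
    (hlt : f u < runningMax c f u) : runningMax c f =ᶠ[𝓝 u] fun _ => runningMax c f u := by
  have hcont : ContinuousAt (runningMax c f) u :=
    (continuousOn_runningMax hf).continuousAt (Ici_mem_nhds hu)
  obtain ⟨ε, hε, hball⟩ := Metric.eventually_nhds_iff_ball.mp
    ((eventually_gt_nhds hu).and (hf.continuousAt.eventually_lt hcont hlt))
  have hconst : ∀ a ∈ Metric.ball u ε, ∀ b ∈ Metric.ball u ε, a ≤ b →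
      runningMax c f a = runningMax c f b := by
    intro a ha b hb hab
    have hsub : Icc a b ⊆ Metric.ball u ε := (Real.ball_eq_Ioo u ε ▸ ordConnected_Ioo).out ha hb
    exact (runningMax_mono hf (hball a ha).1.le hab).antisymm <|
      runningMax_le_of_forall_lt hf (hball a ha).1.le hab fun w hw =>
        (hball w (hsub (Ioc_subset_Icc_self hw))).2
  filter_upwards [Metric.ball_mem_nhds u hε] with v hv
  rcases le_total u v with huv | hvu
  · exact (hconst u (Metric.mem_ball_self hε) v hv huv).symm
  · exact hconst v hv u (Metric.mem_ball_self hε) hvu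

theorem runningMax_neg (c : ℝ) (f : ℝ → ℝ) (u : ℝ) :
    runningMax (-c) (-f) u = -min c (sInf (f '' Icc 0 u)) := by
  rw [runningMax, Real.sInf_def, ← max_neg_neg, neg_neg, ← image_neg_eq_neg, image_image]
  rfl

end runningMax

theorem StieltjesFunction.ae_eq_of_eqOn_runningMax (S : StieltjesFunction ℝ) {c : ℝ} {f : ℝ → ℝ}
    (hf : Continuous f) (hS : ∀ u, 0 ≤ u → S u = runningMax c f u) :
    ∀ᵐ u ∂S.measure, 0 < u → f u = S u := by
  rw [ae_iff]
  refine S.measure_eq_zero_of_eventuallyEq fun u hu => ?_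
  obtain ⟨hu, hne⟩ := Classical.not_imp.mp hu
  have hSR : S =ᶠ[𝓝 u] runningMax c f :=
    eventually_of_mem (Ioi_mem_nhds hu) fun v (hv : 0 < v) => hS v hv.le
  have hlt : f u < runningMax c f u :=
    (le_runningMax_of_mem hf (right_mem_Icc.2 hu.le)).lt_of_ne (hS u hu.le ▸ hne)
  rw [hS u hu.le]
  exact hSR.trans (runningMax_eventuallyEq_of_lt hf hu hlt)

theorem normal_reflection_integrals_vanish_general
    {Ω : Type*} [MeasurableSpace Ω] (P : Measure Ω)
    (X : ℝ → Ω → ℝ) (hXcont : ∀ ω, Continuous fun t => X t ω)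
    (i s : ℝ)
    (Ifn Sfn : ℝ → Ω → ℝ)
    (hIfn : ∀ ω, ∀ t, 0 ≤ t → Ifn t ω = min i (sInf ((fun u => X u ω) '' Icc 0 t)))
    (hSfn : ∀ ω, ∀ t, 0 ≤ t → Sfn t ω = max s (sSup ((fun u => X u ω) '' Icc 0 t)))
    (SS II : Ω → StieltjesFunction ℝ)
    (hSS : ∀ ω, ∀ t, 0 ≤ t → SS ω t = Sfn t ω)
    (hII : ∀ ω, ∀ t, 0 ≤ t → II ω t = -Ifn t ω)
    (V : ℝ → ℝ → ℝ → ℝ)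
    (hrefl_i : ∀ a b : ℝ, a ≤ b → deriv (fun a' => V a' a b) a = 0)
    (hrefl_s : ∀ a b : ℝ, a ≤ b → deriv (fun b' => V a b b') b = 0)
    (t : ℝ) :
    ∀ᵐ ω ∂P,
      (∫ u in Ioc (0:ℝ) t,
          deriv (fun a' => V a' (X u ω) (Sfn u ω)) (Ifn u ω) ∂(II ω).measure = 0)
      ∧ (∫ u in Ioc (0:ℝ) t,
          deriv (fun b' => V (Ifn u ω) (X u ω) b') (Sfn u ω) ∂(SS ω).measure = 0) := by
  refine Eventually.of_forall fun ω => ?_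
  have hX := hXcont ω
  have hII_eq : ∀ u, 0 ≤ u → II ω u = runningMax (-i) (-fun u => X u ω) u := fun u hu => by
    rw [hII ω u hu, hIfn ω u hu, runningMax_neg]
  have hIX : ∀ u, 0 ≤ u → Ifn u ω ≤ X u ω := fun u hu => by
    have h := le_runningMax_of_mem (c := -i) hX.neg (right_mem_Icc.2 hu)
    rw [← hII_eq u hu, hII ω u hu, Pi.neg_apply, neg_le_neg_iff] at h
    exact h
  have hXS : ∀ u, 0 ≤ u → X u ω ≤ Sfn u ω := fun u hu =>
    hSfn ω u hu ▸ le_runningMax_of_mem hX (right_mem_Icc.2 hu)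
  constructor
  · refine setIntegral_eq_zero_of_ae_eq_zero ?_
    filter_upwards [(II ω).ae_eq_of_eqOn_runningMax hX.neg hII_eq] with u hcontact hu
    have hXI : X u ω = Ifn u ω := by simpa [hII ω u hu.1.le] using hcontact hu.1
    exact hXI ▸ hrefl_i _ _ (hXS u hu.1.le)
  · refine setIntegral_eq_zero_of_ae_eq_zero ?_
    filter_upwards [(SS ω).ae_eq_of_eqOn_runningMax hX fun u hu =>
      (hSS ω u hu).trans (hSfn ω u hu)] with u hcontact hu
    have hXS' : X u ω = Sfn u ω := (hcontact hu.1).trans (hSS ω u hu.1.le)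
    exact hXS' ▸ hrefl_s _ _ (hIX u hu.1.le)

/-- Normal reflection kills the boundary integrals: for a continuous process `X` with
`I_t = i ∧ inf_{u≤t} X_u` (decreasing) and `S_t = s ∨ sup_{u≤t} X_u` (increasing), if
`V` is `C¹` and satisfies `∂ᵢV(i,x,s)|_{x=i} = 0` and `∂ₛV(i,x,s)|_{x=s} = 0`, then the
(Stieltjes) integrals `∫_0^t ∂ᵢV(I_u,X_u,S_u) dI_u` and `∫_0^t ∂ₛV(I_u,X_u,S_u) dS_u`
in the Itô expansion of `V(I_t,X_t,S_t)` vanish almost surely.  Here `dS` is the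
Lebesgue–Stieltjes measure of the increasing path `S` and `dI = -d(-I)` that of `I`. -/
theorem normal_reflection_integrals_vanish
    {Ω : Type*} [MeasurableSpace Ω] (P : Measure Ω) [IsProbabilityMeasure P]
    (X : ℝ → Ω → ℝ) (hXcont : ∀ ω, Continuous fun t => X t ω)
    (i s : ℝ) (hiX : ∀ ω, i ≤ X 0 ω) (hXs : ∀ ω, X 0 ω ≤ s)
    (Ifn Sfn : ℝ → Ω → ℝ)
    (hIfn : ∀ ω, ∀ t, 0 ≤ t → Ifn t ω = min i (sInf ((fun u => X u ω) '' Icc 0 t)))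
    (hSfn : ∀ ω, ∀ t, 0 ≤ t → Sfn t ω = max s (sSup ((fun u => X u ω) '' Icc 0 t)))
    (SS II : Ω → StieltjesFunction ℝ)
    (hSS : ∀ ω, ∀ t, 0 ≤ t → SS ω t = Sfn t ω)
    (hII : ∀ ω, ∀ t, 0 ≤ t → II ω t = -Ifn t ω)
    (V : ℝ → ℝ → ℝ → ℝ)
    (hVsmooth : ContDiff ℝ 1 fun p : ℝ × ℝ × ℝ => V p.1 p.2.1 p.2.2)
    (hrefl_i : ∀ a b : ℝ, a ≤ b → deriv (fun a' => V a' a b) a = 0)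
    (hrefl_s : ∀ a b : ℝ, a ≤ b → deriv (fun b' => V a b b') b = 0)
    (t : ℝ) (ht : 0 ≤ t) :
    ∀ᵐ ω ∂P,
      (∫ u in Ioc (0:ℝ) t,
          deriv (fun a' => V a' (X u ω) (Sfn u ω)) (Ifn u ω) ∂(II ω).measure = 0)
      ∧ (∫ u in Ioc (0:ℝ) t,
          deriv (fun b' => V (Ifn u ω) (X u ω) b') (Sfn u ω) ∂(SS ω).measure = 0) :=
  normal_reflection_integrals_vanish_general P X hXcont i s Ifn Sfn hIfn hSfn SS II hSS hII V
    hrefl_i hrefl_s t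
end
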